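/- arXiv:2508.15573 — 5 statements merged into one kernel-verified Lean document; each statement's English description precedes it below -/
import Mathlib

section
/- Let $L$ be a perfect Lie algebra over $\mathbb{C}$ (i.e., $[L,L] = L$) with center $Z$, and let $F$ be a biderivation of $L$. Then $F(L, Z) = 0$ and $F(Z, L) = 0$. -/
/-- If `L` is a perfect complex Lie algebra with center `Z` and `F` is a
biderivation of `L`, then `F(L, Z) = 0` and `F(Z, L) = 0`. -/
theorem biderivation_center_zero_of_perfect
    (L : Type*) [LieRing L] [LieAlgebra ℂ L]
    (hperf : ⁅(⊤ : LieIdeal ℂ L), (⊤ : LieIdeal ℂ L)⁆ = ⊤)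
    (F : L →ₗ[ℂ] L →ₗ[ℂ] L)
    (h1 : ∀ x y z : L, F ⁅x, y⁆ z = ⁅x, F y z⁆ - ⁅y, F x z⁆)
    (h2 : ∀ x y z : L, F x ⁅y, z⁆ = ⁅y, F x z⁆ - ⁅z, F x y⁆) :
    (∀ x z : L, z ∈ LieAlgebra.center ℂ L → F x z = 0) ∧
    (∀ x z : L, z ∈ LieAlgebra.center ℂ L → F z x = 0) := by
  -- centrality characterization
  have hcent : ∀ z : L, z ∈ LieAlgebra.center ℂ L ↔ ∀ w : L, ⁅w, z⁆ = 0 := by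
    intro z
    exact LieModule.mem_maxTrivSubmodule ℂ L L z
  -- F x z is central when z is
  have hc1 : ∀ x z : L, z ∈ LieAlgebra.center ℂ L → F x z ∈ LieAlgebra.center ℂ L := by
    intro x z hz
    rw [hcent] at hz ⊢
    intro w
    have := h2 x w z
    rw [hz w] at this
    simp only [map_zero] at this
    have hzz : ⁅z, F x w⁆ = 0 := by rw [← lie_skew, hz, neg_zero]
    rw [hzz, sub_zero] at this
    exact this.symm
  -- F z x is central when z is
  have hc2 : ∀ x z : L, z ∈ LieAlgebra.center ℂ L → F z x ∈ LieAlgebra.center ℂ L := by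
    intro x z hz
    rw [hcent] at hz ⊢
    intro w
    have := h1 w z x
    rw [hz w] at this
    simp only [map_zero, LinearMap.zero_apply] at this
    have hzz : ⁅z, F w x⁆ = 0 := by rw [← lie_skew, hz, neg_zero]
    rw [hzz, sub_zero] at this
    exact this.symm
  have key1 : ∀ x z : L, z ∈ LieAlgebra.center ℂ L → F x z = 0 := by
    intro x z hz
    -- the set {x | F x z = 0} is a Lie ideal
    let K : LieIdeal ℂ L :=
      { toSubmodule := LinearMap.ker (F.flip z)
        lie_mem := by
          intro a b _
          show F ⁅a, b⁆ z = 0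
          rw [h1, (hcent _).mp (hc1 b z hz) a, (hcent _).mp (hc1 a z hz) b, sub_zero] }
    have hle : ⁅(⊤ : LieIdeal ℂ L), (⊤ : LieIdeal ℂ L)⁆ ≤ K := by
      rw [LieSubmodule.lie_le_iff]
      intro a _ b _
      show F ⁅a, b⁆ z = 0
      rw [h1, (hcent _).mp (hc1 b z hz) a, (hcent _).mp (hc1 a z hz) b, sub_zero]
    rw [hperf] at hle
    exact hle (LieSubmodule.mem_top x)
  refine ⟨key1, ?_⟩
  intro x z hz
  -- the set {x | F z x = 0} is a Lie ideal
  let K : LieIdeal ℂ L :=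
    { toSubmodule := LinearMap.ker (F z)
      lie_mem := by
        intro a b _
        show F z ⁅a, b⁆ = 0
        rw [h2]
        have h1c : ⁅a, F z b⁆ = 0 := (hcent _).mp (hc2 b z hz) a
        have h2c : ⁅b, F z a⁆ = 0 := (hcent _).mp (hc2 a z hz) b
        rw [h1c, h2c, sub_zero] }
  have hle : ⁅(⊤ : LieIdeal ℂ L), (⊤ : LieIdeal ℂ L)⁆ ≤ K := by
    rw [LieSubmodule.lie_le_iff]
    intro a _ b _
    show F z ⁅a, b⁆ = 0
    rw [h2]
    have h1c : ⁅a, F z b⁆ = 0 := (hcent _).mp (hc2 b z hz) a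
    have h2c : ⁅b, F z a⁆ = 0 := (hcent _).mp (hc2 a z hz) b
    rw [h1c, h2c, sub_zero]
  rw [hperf] at hle
  exact hle (LieSubmodule.mem_top x)
end

section
/- Let $(L, [\cdot,\cdot], \cdot)$ be a commutative post-Lie algebra over a field $\mathbb{F}$. Then the bilinear map $\delta: L \times L \to L$ defined by $\delta(x,y) = x \cdot y$ is a symmetric biderivation of the Lie algebra $L$. -/
/-- For a commutative post-Lie algebra `(L, [·,·], ·)` over a field `F`,
the map `δ(x, y) = x · y` is a symmetric biderivation of the Lie algebra `L`. -/
theorem commPostLie_is_symmetric_biderivation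
    (F : Type*) [Field F] (L : Type*) [LieRing L] [LieAlgebra F L]
    (p : L →ₗ[F] L →ₗ[F] L)
    (hcomm : ∀ x y : L, p x y = p y x)
    (hpost1 : ∀ x y z : L, p ⁅x, y⁆ z = p x (p y z) - p y (p x z))
    (hpost2 : ∀ x y z : L, p x ⁅y, z⁆ = ⁅p x y, z⁆ + ⁅y, p x z⁆) :
    (∀ x y : L, p x y = p y x) ∧
    (∀ x y z : L, p ⁅x, y⁆ z = ⁅x, p y z⁆ - ⁅y, p x z⁆) := by
  refine ⟨hcomm, fun x y z => ?_⟩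
  rw [hcomm, hpost2, hcomm z x, hcomm z y, ← lie_skew y (p x z)]
  abel
end

section
/- Let $\mathfrak{g}$ be a finite-dimensional complex simple Lie algebra and $\mathfrak{L}(\mathfrak{g})$ the affine-Virasoro Lie algebra. For any nonzero integer $m$, every derivation $\phi: \mathfrak{L}(\mathfrak{g})_0 \to \widetilde{\mathfrak{g}}_m$ (with respect to the adjoint action) is inner, i.e., $H^1(\mathfrak{L}(\mathfrak{g})_0, \widetilde{\mathfrak{g}}_m) = 0$, where $\mathfrak{L}(\mathfrak{g})_0 = \mathfrak{g} \oplus \mathrm{span}\{d_0, K_1, K_2\}$ and $\widetilde{\mathfrak{g}}_m = \mathfrak{g} \otimes t^m$. -/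
/-- The affine-Virasoro Lie algebra structure: `L` is the affine-Virasoro Lie algebra
associated with the Lie algebra `g`, with `E m x` playing the role of `x ⊗ tᵐ`,
`d m` the Virasoro generators, and central elements `K₁, K₂`. -/
structure AffineVirasoro (g L : Type*) [LieRing g] [LieAlgebra ℂ g]
    [LieRing L] [LieAlgebra ℂ L] where
  E : ℤ → g →ₗ[ℂ] L
  d : ℤ → L
  K₁ : L
  K₂ : L
  bracket_EE : ∀ (m n : ℤ) (x y : g), ⁅E m x, E n y⁆ =
    E (m + n) ⁅x, y⁆ + (if m + n = 0 then ((m : ℂ) * killingForm ℂ g x y) • K₁ else 0)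
  bracket_dE : ∀ (m n : ℤ) (x : g), ⁅d m, E n x⁆ = (n : ℂ) • E (m + n) x
  bracket_dd : ∀ m n : ℤ, ⁅d m, d n⁆ =
    ((n : ℂ) - (m : ℂ)) • d (m + n) +
      (if m + n = 0 then (((m : ℂ) ^ 3 - (m : ℂ)) / 12) • K₂ else 0)
  central_K₁ : ∀ v : L, ⁅v, K₁⁆ = 0
  central_K₂ : ∀ v : L, ⁅v, K₂⁆ = 0
  spans : Submodule.span ℂ
    (({K₁, K₂} : Set L) ∪ Set.range d ∪ ⋃ m : ℤ, Set.range (E m)) = ⊤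
  indep : ∀ (f : ℤ →₀ g) (c : ℤ →₀ ℂ) (a b : ℂ),
    ((f.sum fun m x => E m x) + (c.sum fun m t => t • d m) + a • K₁ + b • K₂ = 0) →
    f = 0 ∧ c = 0 ∧ a = 0 ∧ b = 0

/-- The degree-`n` graded component `L(g)ₙ` of the affine-Virasoro Lie algebra. -/
def AffineVirasoro.graded {g L : Type*} [LieRing g] [LieAlgebra ℂ g]
    [LieRing L] [LieAlgebra ℂ L] (V : AffineVirasoro g L) (n : ℤ) : Submodule ℂ L :=
  if n = 0 then
    Submodule.span ℂ (Set.range (V.E 0) ∪ {V.d 0, V.K₁, V.K₂})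
  else
    Submodule.span ℂ (Set.range (V.E n) ∪ {V.d n})

/-- The degree-`n` component `g̃ₙ` of the ideal `g̃ = ĝ ⊕ ℂK₁`. -/
def AffineVirasoro.gtilde {g L : Type*} [LieRing g] [LieAlgebra ℂ g]
    [LieRing L] [LieAlgebra ℂ L] (V : AffineVirasoro g L) (n : ℤ) : Submodule ℂ L :=
  if n = 0 then
    Submodule.span ℂ (Set.range (V.E 0) ∪ {V.K₁})
  else
    Submodule.span ℂ (Set.range (V.E n))

/-- For m ≠ 0, every derivation L(g)₀ → g̃ₘ is inner, i.e. H¹(L(g)₀, g̃ₘ) = 0. -/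
theorem affineVirasoro_H1_graded_zero (g L : Type*) [LieRing g] [LieAlgebra ℂ g] [LieAlgebra.IsSimple ℂ g] [FiniteDimensional ℂ g] [LieRing L] [LieAlgebra ℂ L] (V : AffineVirasoro g L)
    (m : ℤ) (hm : m ≠ 0) (D : L →ₗ[ℂ] L)
    (hmap : ∀ u ∈ V.graded 0, D u ∈ V.gtilde m)
    (hder : ∀ u ∈ V.graded 0, ∀ v ∈ V.graded 0, D ⁅u, v⁆ = ⁅u, D v⁆ - ⁅v, D u⁆) :
    ∃ w ∈ V.gtilde m, ∀ u ∈ V.graded 0, D u = ⁅u, w⁆ := by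
    classical
  have hm' : (m : ℂ) ≠ 0 := Int.cast_ne_zero.mpr hm
  have hgt : V.gtilde m = Submodule.span ℂ (Set.range (V.E m)) := by
    simp [AffineVirasoro.gtilde, hm]
  have hgr : V.graded 0 =
      Submodule.span ℂ (Set.range (V.E 0) ∪ {V.d 0, V.K₁, V.K₂}) := by
    simp [AffineVirasoro.graded]
  -- ad(d 0) acts as multiplication by m on gtilde m
  have hact : ∀ v ∈ V.gtilde m, ⁅V.d 0, v⁆ = (m : ℂ) • v := by
    intro v hv
    rw [hgt] at hv
    induction hv using Submodule.span_induction with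
    | mem x hx =>
      obtain ⟨y, rfl⟩ := hx
      simpa using V.bracket_dE 0 m y
    | zero => simp
    | add x y _ _ hx hy => rw [lie_add, hx, hy, smul_add]
    | smul c x _ hx => rw [lie_smul, hx, smul_comm]
  have hd0 : V.d 0 ∈ V.graded 0 := by
    rw [hgr]; exact Submodule.subset_span (Or.inr (by simp))
  have hE0 : ∀ x : g, V.E 0 x ∈ V.graded 0 := fun x => by
    rw [hgr]; exact Submodule.subset_span (Or.inl ⟨x, rfl⟩)
  have hK1 : V.K₁ ∈ V.graded 0 := by
    rw [hgr]; exact Submodule.subset_span (Or.inr (by simp))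
  have hK2 : V.K₂ ∈ V.graded 0 := by
    rw [hgr]; exact Submodule.subset_span (Or.inr (by simp))
  have hskew1 : ∀ v : L, ⁅V.K₁, v⁆ = 0 := fun v => by
    rw [← lie_skew, V.central_K₁, neg_zero]
  have hskew2 : ∀ v : L, ⁅V.K₂, v⁆ = 0 := fun v => by
    rw [← lie_skew, V.central_K₂, neg_zero]
  refine ⟨(m : ℂ)⁻¹ • D (V.d 0), Submodule.smul_mem _ _ (hmap _ hd0), ?_⟩
  intro u hu
  have hu' := hu
  rw [hgr] at hu'
  induction hu' using Submodule.span_induction with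
  | mem x hx =>
    rcases hx with ⟨y, rfl⟩ | hx
    · -- x = E 0 y
      have h1 := hder _ hd0 _ (hE0 y)
      have h2 : ⁅V.d 0, V.E 0 y⁆ = 0 := by simpa using V.bracket_dE 0 0 y
      rw [h2, map_zero, hact _ (hmap _ (hE0 y))] at h1
      have h3 : ⁅V.E 0 y, D (V.d 0)⁆ = (m : ℂ) • D (V.E 0 y) :=
        (sub_eq_zero.mp h1.symm).symm
      rw [lie_smul, h3, smul_smul, inv_mul_cancel₀ hm', one_smul]
    · rcases hx with rfl | rfl | rfl
      · -- x = d 0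
        rw [lie_smul, hact _ (hmap _ hd0), smul_smul, inv_mul_cancel₀ hm', one_smul]
      · -- x = K₁
        have h1 := hder _ hK1 _ hd0
        rw [hskew1, map_zero, hskew1, zero_sub, hact _ (hmap _ hK1)] at h1
        have h2 : D V.K₁ = 0 := by
          have := smul_eq_zero.mp (neg_eq_zero.mp h1.symm)
          tauto
        rw [h2, hskew1]
      · -- x = K₂
        have h1 := hder _ hK2 _ hd0
        rw [hskew2, map_zero, hskew2, zero_sub, hact _ (hmap _ hK2)] at h1
        have h2 : D V.K₂ = 0 := by
          have := smul_eq_zero.mp (neg_eq_zero.mp h1.symm)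
          tauto
        rw [h2, hskew2]
  | zero => simp
  | add x y hx hy ihx ihy =>
    rw [map_add, add_lie, ihx (hgr ▸ hx), ihy (hgr ▸ hy)]
  | smul c x hx ihx =>
    rw [map_smul, smul_lie, ihx (hgr ▸ hx)]
end

section
/- Let $\mathfrak{g}$ be a finite-dimensional complex simple Lie algebra and $\mathfrak{L}(\mathfrak{g})$ its affine-Virasoro Lie algebra. If $D$ is a derivation of $\mathfrak{L}(\mathfrak{g})$ of degree zero (i.e., $D(\mathfrak{L}(\mathfrak{g})_m) \subseteq \mathfrak{L}(\mathfrak{g})_m$ for all $m$) that vanishes on $\widetilde{\mathfrak{g}} = \mathfrak{g} \otimes \mathbb{C}[t^{\pm 1}] \oplus \mathbb{C}K_1$, then $D(d_m) = 0$ for all $m \in \mathbb{Z}$ and $D(K_2) = 0$; hence $D = 0$. -/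
/-!
For `m ≠ 0`, `D (d m)` lies in `L(g)ₘ = g ⊗ tᵐ ⊕ ℂ dₘ` and, since `D` kills `g̃`, it commutes with
all of `g̃`. Writing `D (d m) = y ⊗ tᵐ + c dₘ`, bracketing with `x ⊗ tⁿ` gives `⁅y, x⁆ + c n x = 0`
for every `n ≠ -m`; varying `n` forces `c = 0`, and then `y` is central in `g`, hence `0`.
The Virasoro relations `⁅d₁, d₋₁⁆ = -2 d₀` and `⁅d₂, d₋₂⁆ = -4 d₀ + ½ K₂` then give
`D d₀ = 0` and `D K₂ = 0`, and `D` vanishes on a spanning set of `L(g)`.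
-/

namespace AffineVirasoro

variable {g L : Type*} [LieRing g] [LieAlgebra ℂ g] [LieRing L] [LieAlgebra ℂ L]
  (V : AffineVirasoro g L)

lemma E_injective (m : ℤ) : Function.Injective (V.E m) := by
  refine (injective_iff_map_eq_zero _).mpr fun y hy => ?_
  have h := (V.indep (Finsupp.single m y) 0 0 0 (by simpa using hy)).1
  rwa [Finsupp.single_eq_zero] at h

lemma d_mem_graded (m : ℤ) : V.d m ∈ V.graded m := by
  unfold graded
  split_ifs with hm
  · exact Submodule.subset_span (by simp [hm])
  · exact Submodule.subset_span (by simp)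

lemma exists_eq_E_add_smul_d_of_mem_graded {m : ℤ} (hm : m ≠ 0) {v : L} (hv : v ∈ V.graded m) :
    ∃ (y : g) (c : ℂ), v = V.E m y + c • V.d m := by
  rw [graded, if_neg hm, Submodule.span_union, Submodule.mem_sup] at hv
  obtain ⟨_, hE, _, hd, rfl⟩ := hv
  rw [← LinearMap.coe_range, Submodule.span_eq] at hE
  obtain ⟨y, rfl⟩ := hE
  obtain ⟨c, rfl⟩ := Submodule.mem_span_singleton.mp hd
  exact ⟨y, c, rfl⟩

lemma lie_E_add_smul_d_E {m n : ℤ} (hmn : m + n ≠ 0) (y x : g) (c : ℂ) :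
    ⁅V.E m y + c • V.d m, V.E n x⁆ = V.E (m + n) (⁅y, x⁆ + (c * n) • x) := by
  rw [add_lie, smul_lie, V.bracket_EE, V.bracket_dE, if_neg hmn, map_add, map_smul, smul_smul,
    add_zero]

lemma eq_zero_of_mem_graded_of_lie_E_eq_zero [Nontrivial g] [LieModule.IsFaithful ℂ g g]
    {m : ℤ} (hm : m ≠ 0) {v : L} (hv : v ∈ V.graded m) (hcomm : ∀ n x, ⁅v, V.E n x⁆ = 0) :
    v = 0 := by
  obtain ⟨y, c, rfl⟩ := V.exists_eq_E_add_smul_d_of_mem_graded hm hv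
  have hcoeff : ∀ n : ℤ, m + n ≠ 0 → ∀ x : g, ⁅y, x⁆ + (c * n) • x = 0 := fun n hmn x =>
    V.E_injective (m + n) <| by rw [← V.lie_E_add_smul_d_E hmn, hcomm, map_zero]
  have hc : c = 0 := by
    obtain ⟨x, hx⟩ := exists_ne (0 : g)
    have hcx : c • x = 0 := by
      linear_combination (norm := (push_cast; module)) hcoeff (2 - m) (by omega) x -
        hcoeff (1 - m) (by omega) x
    exact (smul_eq_zero.mp hcx).resolve_right hx
  have hy : y = 0 := (LieModule.toEnd_eq_iff (R := ℂ) (L := g) (M := g)).mp <|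
    LinearMap.ext fun x => by simpa [hc] using hcoeff (1 - m) (by omega) x
  simp [hc, hy]

variable {V} {D : LieDerivation ℂ L L}

lemma lie_apply_d_E_eq_zero (hE : ∀ m x, D (V.E m x) = 0) (m n : ℤ) (x : g) :
    ⁅D (V.d m), V.E n x⁆ = 0 := by
  have h := D.apply_lie_eq_add (V.d m) (V.E n x)
  rw [V.bracket_dE, map_smul, hE, hE, smul_zero, lie_zero, zero_add] at h
  exact h.symm

lemma apply_d_zero_eq_zero (hd : ∀ m ≠ 0, D (V.d m) = 0) : D (V.d 0) = 0 := by
  have h := D.apply_lie_eq_add (V.d 1) (V.d (-1))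
  rw [V.bracket_dd, hd 1 one_ne_zero, hd (-1) (by norm_num), zero_lie, lie_zero, add_zero] at h
  norm_num at h
  exact h

lemma apply_K₂_eq_zero (hd : ∀ m, D (V.d m) = 0) : D V.K₂ = 0 := by
  have h := D.apply_lie_eq_add (V.d 2) (V.d (-2))
  rw [V.bracket_dd, hd 2, hd (-2), zero_lie, lie_zero, add_zero] at h
  norm_num [hd 0] at h
  exact h

lemma eq_zero_of_apply_generators_eq_zero (hE : ∀ m x, D (V.E m x) = 0) (hK₁ : D V.K₁ = 0)
    (hK₂ : D V.K₂ = 0) (hd : ∀ m, D (V.d m) = 0) : D = 0 := by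
  suffices (D : L →ₗ[ℂ] L) = 0 from LieDerivation.ext fun v => LinearMap.congr_fun this v
  refine LinearMap.ext_on V.spans ?_
  rintro v (((rfl | rfl) | ⟨m, rfl⟩) | hv)
  · exact hK₁
  · exact hK₂
  · exact hd m
  · obtain ⟨m, x, rfl⟩ := Set.mem_iUnion.mp hv
    exact hE m x

end AffineVirasoro

theorem affineVirasoro_degree_zero_derivation_general (g L : Type*) [LieRing g] [LieAlgebra ℂ g] [LieAlgebra.IsSimple ℂ g] [LieRing L] [LieAlgebra ℂ L] (V : AffineVirasoro g L)
    (D : LieDerivation ℂ L L)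
    (hdeg : ∀ (m : ℤ), ∀ v ∈ V.graded m, D v ∈ V.graded m)
    (hE : ∀ (m : ℤ) (x : g), D (V.E m x) = 0)
    (hK₁ : D V.K₁ = 0) :
    (∀ m : ℤ, D (V.d m) = 0) ∧ D V.K₂ = 0 ∧ D = 0 := by
  have := LieAlgebra.IsSimple.nontrivial ℂ (L := g)
  have hd_ne : ∀ m ≠ 0, D (V.d m) = 0 := fun m hm =>
    V.eq_zero_of_mem_graded_of_lie_E_eq_zero hm (hdeg m _ (V.d_mem_graded m))
      (AffineVirasoro.lie_apply_d_E_eq_zero hE m)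
  have hd : ∀ m, D (V.d m) = 0 := fun m => by
    rcases eq_or_ne m 0 with rfl | hm
    exacts [AffineVirasoro.apply_d_zero_eq_zero hd_ne, hd_ne m hm]
  have hK₂ := AffineVirasoro.apply_K₂_eq_zero hd
  exact ⟨hd, hK₂, AffineVirasoro.eq_zero_of_apply_generators_eq_zero hE hK₁ hK₂ hd⟩

/-- A degree-zero derivation of the affine-Virasoro Lie algebra vanishing on g̃ = g ⊗ ℂ[t,t⁻¹] ⊕ ℂK₁ kills all the dₘ and K₂, hence is zero. -/
theorem affineVirasoro_degree_zero_derivation (g L : Type*) [LieRing g] [LieAlgebra ℂ g] [LieAlgebra.IsSimple ℂ g] [FiniteDimensional ℂ g] [LieRing L] [LieAlgebra ℂ L] (V : AffineVirasoro g L)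
    (D : LieDerivation ℂ L L)
    (hdeg : ∀ (m : ℤ), ∀ v ∈ V.graded m, D v ∈ V.graded m)
    (hE : ∀ (m : ℤ) (x : g), D (V.E m x) = 0)
    (hK₁ : D V.K₁ = 0) :
    (∀ m : ℤ, D (V.d m) = 0) ∧ D V.K₂ = 0 ∧ D = 0 :=
  affineVirasoro_degree_zero_derivation_general g L V D hdeg hE hK₁
end

section
/- Let $L$ be a finite-dimensional semisimple complex Lie algebra, and let $V$, $W$ be $L$-modules with $V$ finite-dimensional. Suppose $\delta: L \times V \to W$ is a bilinear map such that for each $x \in L$ the map $v \mapsto \delta(x,v)$ is an $L$-module homomorphism $V \to W$, and for each $v \in V$ the map $x \mapsto \delta(x,v)$ is a derivation from $L$ to $W$. Then $\delta = 0$. -/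
/-- Let `L` be a finite-dimensional semisimple complex Lie algebra,
`V`, `W` be `L`-modules with `V` finite-dimensional. If `δ : L × V → W` is bilinear,
an `L`-module homomorphism in the second argument and a derivation in the first
argument, then `δ = 0`. -/
theorem bilinear_hom_derivation_eq_zero
    (L : Type*) [LieRing L] [LieAlgebra ℂ L] [FiniteDimensional ℂ L]
    [LieAlgebra.IsSemisimple ℂ L]
    (V W : Type*) [AddCommGroup V] [Module ℂ V] [LieRingModule L V] [LieModule ℂ L V]
    [FiniteDimensional ℂ V]
    [AddCommGroup W] [Module ℂ W] [LieRingModule L W] [LieModule ℂ L W]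
    (δ : L →ₗ[ℂ] V →ₗ[ℂ] W)
    (hhom : ∀ (x y : L) (v : V), δ x ⁅y, v⁆ = ⁅y, δ x v⁆)
    (hder : ∀ (x y : L) (v : V), δ ⁅x, y⁆ v = ⁅x, δ y v⁆ - ⁅y, δ x v⁆) :
    δ = 0 := by
  -- (C): rewrite the derivation property using hhom
  have hC : ∀ (x y : L) (v : V), δ ⁅x, y⁆ v = δ y ⁅x, v⁆ - δ x ⁅y, v⁆ := by
    intro x y v
    rw [hder, hhom, hhom]
  -- (D): symmetry identity
  have hD : ∀ (x y z : L) (v : V), δ y ⁅⁅x, z⁆, v⁆ = δ x ⁅⁅y, z⁆, v⁆ := by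
    intro x y z v
    have h := hhom ⁅x, y⁆ z v
    rw [hC, hC, lie_sub, ← hhom, ← hhom] at h
    -- h : δ y ⁅x, ⁅z, v⁆⁆ - δ x ⁅y, ⁅z, v⁆⁆ = δ y ⁅z, ⁅x, v⁆⁆ - δ x ⁅z, ⁅y, v⁆⁆
    rw [lie_lie, lie_lie, map_sub, map_sub]
    -- goal : δ y ⁅x,⁅z,v⁆⁆ - δ y ⁅z,⁅x,v⁆⁆ = δ x ⁅y,⁅z,v⁆⁆ - δ x ⁅z,⁅y,v⁆⁆
    exact sub_eq_sub_iff_sub_eq_sub.mp h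
  -- antisymmetry helper
  have hE : ∀ (a b c : L) (v : V), δ a ⁅⁅b, c⁆, v⁆ = -δ a ⁅⁅c, b⁆, v⁆ := by
    intro a b c v
    rw [← lie_skew b c, neg_lie, map_neg]
  -- key : δ x ⁅⁅y,z⁆,v⁆ = 0
  have key : ∀ (x y z : L) (v : V), δ x ⁅⁅y, z⁆, v⁆ = 0 := by
    intro x y z v
    have hchain : δ x ⁅⁅y, z⁆, v⁆ = -δ x ⁅⁅y, z⁆, v⁆ := by
      calc δ x ⁅⁅y, z⁆, v⁆ = δ y ⁅⁅x, z⁆, v⁆ := hD y x z v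
        _ = -δ y ⁅⁅z, x⁆, v⁆ := hE y x z v
        _ = -δ z ⁅⁅y, x⁆, v⁆ := by rw [hD z y x v]
        _ = δ z ⁅⁅x, y⁆, v⁆ := by rw [hE z x y v]
        _ = δ x ⁅⁅z, y⁆, v⁆ := hD x z y v
        _ = -δ x ⁅⁅y, z⁆, v⁆ := hE x z y v
    have h2 : δ x ⁅⁅y, z⁆, v⁆ + δ x ⁅⁅y, z⁆, v⁆ = 0 := eq_neg_iff_add_eq_zero.mp hchain
    rw [← two_smul ℂ] at h2
    rcases smul_eq_zero.mp h2 with h | h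
    · exact absurd h two_ne_zero
    · exact h
  -- perfectness : ⊤ = ⁅⊤, ⊤⁆
  have hperf : (⊤ : LieIdeal ℂ L) ≤ ⁅(⊤ : LieIdeal ℂ L), (⊤ : LieIdeal ℂ L)⁆ := by
    calc (⊤ : LieIdeal ℂ L) = sSup {I : LieIdeal ℂ L | IsAtom I} :=
          (LieAlgebra.IsSemisimple.sSup_atoms_eq_top (R := ℂ) (L := L)).symm
      _ ≤ ⁅(⊤ : LieIdeal ℂ L), (⊤ : LieIdeal ℂ L)⁆ := by
        apply sSup_le
        intro I hI
        have hnab := LieAlgebra.IsSemisimple.non_abelian_of_isAtom I hI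
        have hle : ⁅I, I⁆ ≤ I := LieSubmodule.lie_le_left I I
        have hII : ⁅I, I⁆ = I := by
          rcases hle.lt_or_eq with hlt | heq
          · exfalso
            apply hnab
            rw [LieSubmodule.lie_abelian_iff_lie_self_eq_bot]
            exact hI.2 _ hlt
          · exact heq
        calc I = ⁅I, I⁆ := hII.symm
          _ ≤ ⁅(⊤ : LieIdeal ℂ L), (⊤ : LieIdeal ℂ L)⁆ := LieSubmodule.mono_lie le_top le_top
  have hmem : ∀ w : L, w ∈ (Submodule.span ℂ
      { m : L | ∃ x ∈ (⊤ : LieIdeal ℂ L), ∃ n ∈ (⊤ : LieIdeal ℂ L), ⁅x, n⁆ = m }) := by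
    intro w
    rw [← LieSubmodule.lieIdeal_oper_eq_linear_span', LieSubmodule.mem_toSubmodule]
    exact hperf trivial
  -- δ x ⁅w, v⁆ = 0 for every w
  have key2 : ∀ (x w : L) (v : V), δ x ⁅w, v⁆ = 0 := by
    intro x w v
    induction hmem w using Submodule.span_induction with
    | mem m hm =>
      obtain ⟨a, -, b, -, rfl⟩ := hm
      exact key x a b v
    | zero => rw [zero_lie, map_zero]
    | add m n _ _ hm hn => rw [add_lie, map_add, hm, hn, add_zero]
    | smul t m _ hm => rw [smul_lie, map_smul, hm, smul_zero]
  -- finish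
  ext x v
  show δ x v = 0
  induction hmem x using Submodule.span_induction with
  | mem m hm =>
    obtain ⟨a, -, b, -, rfl⟩ := hm
    rw [hC, key2, key2, sub_zero]
  | zero => rw [map_zero]; rfl
  | add m n _ _ hm hn => rw [map_add]; simp [hm, hn]
  | smul t m _ hm => rw [map_smul]; simp [hm]
end
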